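/- Let f̂(x) = ‖Yᵀx‖₁ for Y ∈ ℝ^{n×p}, let M be the unit sphere in ℝⁿ, and let F̂ = f̂ + δ_M where δ_M is the indicator function of M. Suppose min_{x∈M} f̂(x) > 0. Then F̂ is a KL function with exponent 1/2: for every x̄ ∈ M there exist c > 0, ε > 0, a > 0 such that dist(0, ∂F̂(x))² ≥ c (F̂(x) - F̂(x̄)) for all x ∈ M with ‖x - x̄‖ ≤ ε and F̂(x̄) < F̂(x) < F̂(x̄) + a. -/

import Mathlib

open scoped RealInnerProductSpace
open Matrix

/-- Convex subdifferential of the ℓ1 norm at `z`. -/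
def subdiffL1 {p : ℕ} (z : Fin p → ℝ) : Set (Fin p → ℝ) :=
  {y | ∀ i, |y i| ≤ 1 ∧ (0 < z i → y i = 1) ∧ (z i < 0 → y i = -1)}

/-- `dist(0, ∂F̂(x))` for `x` on the unit sphere: the infimum of
`‖(I - xxᵀ)ζ‖` over `ζ ∈ Y ∂‖·‖₁(Yᵀx)` (cf. Lemma 2.4 of the paper). -/
noncomputable def klSlope {n p : ℕ} (Y : Matrix (Fin n) (Fin p) ℝ)
    (x : EuclideanSpace ℝ (Fin n)) : ℝ :=
  sInf {r | ∃ y ∈ subdiffL1 (Y.transpose.mulVec x),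
    ∃ ζ : EuclideanSpace ℝ (Fin n), ζ = Y.mulVec y ∧ r = ‖ζ - ⟪x, ζ⟫ • x‖}

/-!
On the sphere, every `ζ = Y y` with `y ∈ ∂‖·‖₁(Yᵀx)` satisfies `⟪x, ζ⟫ = f̂(x)`, so its
tangential part `ζ - ⟪x, ζ⟫ x` is small only if `ζ` is close to `f̂(x) x`, hence (for `x` near `x̄`
and `f̂(x)` near `f̂(x̄)`) close to `f̂(x̄) x̄`. The subgradients `Y y` range over finitely many
compact sets, one per sign pattern of `Yᵀx`. The pattern of `x` cannot have `f̂(x̄) x̄` in its set, since then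
`f̂(x) = f̂(x̄) ⟪x, x̄⟫ ≤ f̂(x̄)`; so `f̂(x̄) x̄` keeps a uniform distance `δ` from it, which bounds
`dist(0, ∂F̂(x))` below by `δ / 2`, while `F̂(x) - F̂(x̄) < δ / 4`.
-/

/-- The subdifferential of `|·|` at a point of sign `s`. -/
def signSubdiff : SignType → Set ℝ
  | SignType.zero => Set.Icc (-1) 1
  | SignType.neg => {-1}
  | SignType.pos => {1}

lemma isCompact_signSubdiff (s : SignType) : IsCompact (signSubdiff s) := by
  cases s
  · exact isCompact_Icc
  · exact isCompact_singleton
  · exact isCompact_singleton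

lemma mem_signSubdiff_sign_iff {z y : ℝ} :
    y ∈ signSubdiff (SignType.sign z) ↔ |y| ≤ 1 ∧ (0 < z → y = 1) ∧ (z < 0 → y = -1) := by
  rcases lt_trichotomy z 0 with hz | rfl | hz
  · rw [sign_neg hz]
    simp only [signSubdiff, Set.mem_singleton_iff, hz, not_lt.2 hz.le]
    constructor
    · rintro rfl; norm_num
    · exact fun h => h.2.2 trivial
  · simp [signSubdiff, abs_le]
  · rw [sign_pos hz]
    simp only [signSubdiff, Set.mem_singleton_iff, hz, not_lt.2 hz.le]
    constructor
    · rintro rfl; norm_num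
    · exact fun h => h.2.1 trivial

lemma subdiffL1_eq_pi {p : ℕ} (z : Fin p → ℝ) :
    subdiffL1 z = Set.univ.pi fun i => signSubdiff (SignType.sign (z i)) := by
  ext y
  simp only [subdiffL1, Set.mem_ofPred_eq, Set.mem_univ_pi, mem_signSubdiff_sign_iff]

lemma coe_mem_signSubdiff (s : SignType) : (s : ℝ) ∈ signSubdiff s := by
  cases s <;> simp [signSubdiff]

lemma sign_mem_subdiffL1 {p : ℕ} (z : Fin p → ℝ) :
    (fun i => ((SignType.sign (z i) : SignType) : ℝ)) ∈ subdiffL1 z := by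
  rw [subdiffL1_eq_pi]
  exact fun i _ => coe_mem_signSubdiff _

lemma dotProduct_eq_sum_abs_of_mem_subdiffL1 {p : ℕ} {z y : Fin p → ℝ} (hy : y ∈ subdiffL1 z) :
    y ⬝ᵥ z = ∑ i, |z i| := by
  refine Finset.sum_congr rfl fun i _ => ?_
  obtain ⟨-, hpos, hneg⟩ := hy i
  rcases lt_trichotomy (z i) 0 with hz | hz | hz
  · rw [hneg hz, abs_of_neg hz]; ring
  · simp [hz]
  · rw [hpos hz, abs_of_pos hz]; ring

lemma inner_toLp_mulVec {n p : ℕ} (Y : Matrix (Fin n) (Fin p) ℝ) (x : EuclideanSpace ℝ (Fin n))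
    (y : Fin p → ℝ) :
    ⟪x, (WithLp.toLp 2 (Y *ᵥ y) : EuclideanSpace ℝ (Fin n))⟫ = y ⬝ᵥ (Yᵀ *ᵥ x.ofLp) := by
  rw [EuclideanSpace.inner_eq_star_dotProduct, star_trivial, mulVec_transpose, dotProduct_comm,
    dotProduct_mulVec]
  exact dotProduct_comm _ _

lemma inner_toLp_mulVec_of_mem_subdiffL1 {n p : ℕ} (Y : Matrix (Fin n) (Fin p) ℝ)
    (x : EuclideanSpace ℝ (Fin n)) {y : Fin p → ℝ} (hy : y ∈ subdiffL1 (Yᵀ *ᵥ x.ofLp)) :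
    ⟪x, (WithLp.toLp 2 (Y *ᵥ y) : EuclideanSpace ℝ (Fin n))⟫ = ∑ i, |(Yᵀ *ᵥ x.ofLp) i| := by
  rw [inner_toLp_mulVec, dotProduct_eq_sum_abs_of_mem_subdiffL1 hy]

def subgradientImage {n p : ℕ} (Y : Matrix (Fin n) (Fin p) ℝ) (σ : Fin p → SignType) :
    Set (EuclideanSpace ℝ (Fin n)) :=
  (fun y => WithLp.toLp 2 (Y *ᵥ y)) '' Set.univ.pi fun i => signSubdiff (σ i)

lemma isClosed_subgradientImage {n p : ℕ} (Y : Matrix (Fin n) (Fin p) ℝ) (σ : Fin p → SignType) :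
    IsClosed (subgradientImage Y σ) :=
  ((isCompact_univ_pi fun i => isCompact_signSubdiff (σ i)).image
    ((PiLp.continuous_toLp 2 _).comp (continuous_const.matrix_mulVec continuous_id))).isClosed

lemma toLp_mulVec_mem_subgradientImage {n p : ℕ} (Y : Matrix (Fin n) (Fin p) ℝ)
    {z y : Fin p → ℝ} (hy : y ∈ subdiffL1 z) :
    WithLp.toLp 2 (Y *ᵥ y) ∈ subgradientImage Y fun i => SignType.sign (z i) :=
  ⟨y, subdiffL1_eq_pi z ▸ hy, rfl⟩

lemma le_klSlope {n p : ℕ} (Y : Matrix (Fin n) (Fin p) ℝ) (x : EuclideanSpace ℝ (Fin n)) {r : ℝ}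
    (h : ∀ y ∈ subdiffL1 (Yᵀ *ᵥ x.ofLp), ∀ ζ : EuclideanSpace ℝ (Fin n), ζ.ofLp = Y *ᵥ y →
      r ≤ ‖ζ - ⟪x, ζ⟫ • x‖) :
    r ≤ klSlope Y x := by
  refine le_csInf ⟨_, _, sign_mem_subdiffL1 _, WithLp.toLp 2 (Y *ᵥ _), rfl, rfl⟩ ?_
  rintro _ ⟨y, hy, ζ, hζ, rfl⟩
  exact h y hy ζ hζ

lemma exists_pos_le_dist_of_notMem {ι X : Type*} [Finite ι] [PseudoMetricSpace X] {K : ι → Set X}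
    (hK : ∀ i, IsClosed (K i)) (v : X) :
    ∃ δ > 0, ∀ i, v ∉ K i → ∀ w ∈ K i, δ ≤ dist w v := by
  have hnear : ∀ᶠ w in nhds v, ∀ i, v ∉ K i → w ∉ K i := by
    refine Filter.eventually_all.2 fun i => ?_
    by_cases hv : v ∈ K i
    · exact Filter.Eventually.of_forall fun _ h => absurd hv h
    · filter_upwards [(hK i).isOpen_compl.mem_nhds hv] with w hw using fun _ => hw
  obtain ⟨δ, hδ, hball⟩ := Metric.eventually_nhds_iff.1 hnear
  exact ⟨δ, hδ, fun i hv w hw => not_lt.1 fun hlt => hball hlt i hv hw⟩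

lemma norm_sub_smul_sub_le_norm_sub_inner_smul {E : Type*} [NormedAddCommGroup E]
    [InnerProductSpace ℝ E] {x xbar ζ : E} (hx : ‖x‖ = 1) {lam : ℝ} (hlam : 0 ≤ lam)
    (hζ : lam ≤ ⟪x, ζ⟫) :
    ‖ζ - lam • xbar‖ - (⟪x, ζ⟫ - lam) - lam * ‖x - xbar‖ ≤ ‖ζ - ⟪x, ζ⟫ • x‖ := by
  have hsplit : ⟪x, ζ⟫ • x - lam • xbar = (⟪x, ζ⟫ - lam) • x + lam • (x - xbar) := by
    rw [sub_smul, smul_sub]; abel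
  have hnear : ‖⟪x, ζ⟫ • x - lam • xbar‖ ≤ (⟪x, ζ⟫ - lam) + lam * ‖x - xbar‖ := by
    rw [hsplit]
    refine (norm_add_le _ _).trans_eq ?_
    rw [norm_smul, norm_smul, hx, Real.norm_of_nonneg (sub_nonneg.2 hζ), Real.norm_of_nonneg hlam,
      mul_one]
  linarith [norm_sub_le_norm_sub_add_norm_sub ζ (⟪x, ζ⟫ • x) (lam • xbar)]

theorem stmt_13_general (n p : ℕ) (Y : Matrix (Fin n) (Fin p) ℝ)
    (fhat : EuclideanSpace ℝ (Fin n) → ℝ)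
    (hfhat : ∀ x, fhat x = ∑ i, |Y.transpose.mulVec x i|) :
    ∀ xbar : EuclideanSpace ℝ (Fin n), ‖xbar‖ = 1 →
      ∃ c > (0 : ℝ), ∃ ε > (0 : ℝ), ∃ a > (0 : ℝ),
        ∀ x : EuclideanSpace ℝ (Fin n), ‖x‖ = 1 → ‖x - xbar‖ ≤ ε →
          fhat xbar < fhat x → fhat x < fhat xbar + a →
            c * (fhat x - fhat xbar) ≤ (klSlope Y x) ^ 2 := by
  intro xbar hxbar
  set lam := fhat xbar
  have hlam : 0 ≤ lam := by simp only [lam, hfhat]; positivity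
  obtain ⟨δ, hδ, hsep⟩ :=
    exists_pos_le_dist_of_notMem (isClosed_subgradientImage Y) (lam • xbar)
  refine ⟨δ, hδ, δ / (4 * (lam + 1)), by positivity, δ / 4, by positivity, ?_⟩
  intro x hx hxε hlt hlta
  have hinner : ∀ y ∈ subdiffL1 (Yᵀ *ᵥ x.ofLp), ⟪x, WithLp.toLp 2 (Y *ᵥ y)⟫ = fhat x := fun y hy =>
    (inner_toLp_mulVec_of_mem_subdiffL1 Y x hy).trans (hfhat x).symm
  have hfar : lam • xbar ∉ subgradientImage Y fun i => SignType.sign ((Yᵀ *ᵥ x.ofLp) i) := by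
    rintro ⟨y, hy, hyv⟩
    have hle : ⟪x, xbar⟫ ≤ 1 := by simpa [hx, hxbar] using real_inner_le_norm x xbar
    have := hinner y (subdiffL1_eq_pi _ ▸ hy)
    rw [show WithLp.toLp 2 (Y *ᵥ y) = lam • xbar from hyv, real_inner_smul_right] at this
    nlinarith
  have hclose : lam * ‖x - xbar‖ ≤ δ / 4 := calc
    lam * ‖x - xbar‖ ≤ lam * (δ / (4 * (lam + 1))) := by gcongr
    _ ≤ δ / 4 := by rw [mul_div_assoc', div_le_div_iff₀ (by positivity) (by norm_num)]; nlinarith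
  have hslope : δ / 2 ≤ klSlope Y x := le_klSlope Y x fun y hy ζ hζ => by
    obtain rfl : ζ = WithLp.toLp 2 (Y *ᵥ y) := congrArg (WithLp.toLp 2) hζ
    have hdist := hsep _ hfar _ (toLp_mulVec_mem_subgradientImage Y hy)
    rw [dist_eq_norm] at hdist
    have := norm_sub_smul_sub_le_norm_sub_inner_smul (xbar := xbar) hx hlam (hinner y hy ▸ hlt.le)
    rw [hinner y hy] at this ⊢
    linarith
  calc δ * (fhat x - lam) ≤ δ * (δ / 4) := by gcongr; linarith
    _ = (δ / 2) ^ 2 := by ring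
    _ ≤ klSlope Y x ^ 2 := by gcongr

/-- if the optimal value of `min_{‖x‖=1} ‖Yᵀx‖₁` is positive, then
`F̂ = ‖Yᵀ·‖₁ + δ_M` is a KL function with exponent 1/2. -/
theorem stmt_13 (n p : ℕ) (Y : Matrix (Fin n) (Fin p) ℝ)
    (fhat : EuclideanSpace ℝ (Fin n) → ℝ)
    (hfhat : ∀ x, fhat x = ∑ i, |Y.transpose.mulVec x i|)
    (hpos : ∀ x : EuclideanSpace ℝ (Fin n), ‖x‖ = 1 → 0 < fhat x) :
    ∀ xbar : EuclideanSpace ℝ (Fin n), ‖xbar‖ = 1 →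
      ∃ c > (0 : ℝ), ∃ ε > (0 : ℝ), ∃ a > (0 : ℝ),
        ∀ x : EuclideanSpace ℝ (Fin n), ‖x‖ = 1 → ‖x - xbar‖ ≤ ε →
          fhat xbar < fhat x → fhat x < fhat xbar + a →
            c * (fhat x - fhat xbar) ≤ (klSlope Y x) ^ 2 :=
  stmt_13_general n p Y fhat hfhat
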